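/- (Vanishing successive differences, Theorem 4(ii)) Under the hypotheses of the alternating minimization scheme — S the set of m×n matrices with unit-norm columns, D ∈ ℝ^{d×n} of full row rank, β > 0, f differentiable with L-Lipschitz gradient and bounded below on S, 0 < α < 1/L, and sequences (M_k) ⊆ S, (P_k) with M_{k+1} minimizing N ↦ ⟨∇f(M_k), N − M_k⟩ + (1/(2α))‖N − M_k‖_F² + (1/(2β))‖N − P_k D‖_F² over N ∈ S and P_{k+1} = M_{k+1} Dᵀ (D Dᵀ)⁻¹ — the series Σ_{k≥0} ‖M_{k+1} − M_k‖_F² converges (it is bounded by (F(M_0, P_0) − inf_{(M,P)} F)/(1/(2α) − L/2) where F(M,P) = f(M) + (1/(2β))‖M − PD‖_F²); consequently M_{k+1} − M_k → 0 and P_{k+1} − P_k → 0. -/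

import Mathlib

open Matrix Filter

attribute [local instance] Matrix.normedAddCommGroup Matrix.normedSpace

/-- The Euclidean norm of the `i`-th column of a matrix. -/
noncomputable def colNorm {m n : ℕ} (M : Matrix (Fin m) (Fin n) ℝ) (i : Fin n) : ℝ :=
  Real.sqrt (∑ k, M k i ^ 2)

/-- The Frobenius inner product `⟨A, B⟩ = Σ_{i,j} a_{ij} b_{ij}` of m×n matrices. -/
noncomputable def finner {m n : ℕ} (A B : Matrix (Fin m) (Fin n) ℝ) : ℝ :=
  ∑ i, ∑ j, A i j * B i j

/-- The squared Frobenius norm `‖V‖_F²`. -/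
noncomputable def frobSq {m n : ℕ} (V : Matrix (Fin m) (Fin n) ℝ) : ℝ :=
  ∑ i, ∑ j, V i j ^ 2

/-- The Frobenius norm `‖V‖_F`. -/
noncomputable def frobNorm {m n : ℕ} (V : Matrix (Fin m) (Fin n) ℝ) : ℝ :=
  Real.sqrt (frobSq V)

/-! The scheme is a proximal-gradient step in `M` followed by an exact least-squares step in `P`,
so the penalized objective `F(M, P) = f(M) + ‖M − PD‖_F² / (2β)` decreases along the iterates by
at least `(1/(2α) − L/2) ‖M_{k+1} − M_k‖_F²`: the descent lemma for the `L`-smooth `f` bounds the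
linearization error of the `M`-step, and `P_{k+1}` is the least-squares solution of `P D ≈ M_{k+1}`.
Since `F` is bounded below along the iterates, the decreases are summable, and
`P_{k+1} − P_k = (M_{k+1} − M_k) Dᵀ (D Dᵀ)⁻¹` for `k ≥ 1`. -/

lemma image_one_le_of_deriv_le_affine {φ φ' : ℝ → ℝ} {K : ℝ}
    (hφ : ∀ t ∈ Set.Icc (0 : ℝ) 1, HasDerivAt φ (φ' t) t)
    (hφ' : ∀ t ∈ Set.Ioo (0 : ℝ) 1, φ' t ≤ φ' 0 + K * t) :
    φ 1 ≤ φ 0 + φ' 0 + K / 2 := by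
  set g : ℝ → ℝ := fun t => φ t - φ' 0 * t - K / 2 * t ^ 2
  have hg : ∀ t ∈ Set.Icc (0 : ℝ) 1, HasDerivAt g (φ' t - φ' 0 - K * t) t := fun t ht => by
    have hlin : HasDerivAt (fun s => φ' 0 * s) (φ' 0) t := by
      simpa using (hasDerivAt_id t).const_mul (φ' 0)
    have hquad : HasDerivAt (fun s => K / 2 * s ^ 2) (K * t) t :=
      ((hasDerivAt_pow 2 t).const_mul (K / 2)).congr_deriv (by norm_num; ring)
    exact ((hφ t ht).sub hlin).sub hquad
  have hanti : AntitoneOn g (Set.Icc 0 1) := by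
    refine antitoneOn_of_hasDerivWithinAt_nonpos (f' := fun t => φ' t - φ' 0 - K * t)
      (convex_Icc 0 1) (fun t ht => (hg t ht).continuousAt.continuousWithinAt)
      (fun t ht => ?_) (fun t ht => ?_)
    · rw [interior_Icc] at ht
      exact (hg t (Set.Ioo_subset_Icc_self ht)).hasDerivWithinAt
    · rw [interior_Icc] at ht
      linarith [hφ' t ht]
  have := hanti (Set.left_mem_Icc.2 zero_le_one) (Set.right_mem_Icc.2 zero_le_one) zero_le_one
  simp only [g] at this
  linarith

section Frobenius

variable {m n : ℕ}

lemma frobSq_nonneg (V : Matrix (Fin m) (Fin n) ℝ) : 0 ≤ frobSq V :=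
  Finset.sum_nonneg fun _ _ => Finset.sum_nonneg fun _ _ => sq_nonneg _

@[simp]
lemma frobSq_zero : frobSq (0 : Matrix (Fin m) (Fin n) ℝ) = 0 := by
  simp [frobSq]

@[simp]
lemma finner_zero_right (A : Matrix (Fin m) (Fin n) ℝ) : finner A 0 = 0 := by
  simp [finner]

@[simp]
lemma finner_zero_left (B : Matrix (Fin m) (Fin n) ℝ) : finner 0 B = 0 := by
  simp [finner]

lemma finner_sub_left (A B C : Matrix (Fin m) (Fin n) ℝ) :
    finner (A - B) C = finner A C - finner B C := by
  simp [finner, sub_mul, Finset.sum_sub_distrib]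

lemma frobSq_add (A B : Matrix (Fin m) (Fin n) ℝ) :
    frobSq (A + B) = frobSq A + 2 * finner A B + frobSq B := by
  simp only [frobSq, finner, Matrix.add_apply, add_sq, Finset.sum_add_distrib, Finset.mul_sum,
    mul_assoc]

lemma frobSq_smul (t : ℝ) (V : Matrix (Fin m) (Fin n) ℝ) :
    frobSq (t • V) = t ^ 2 * frobSq V := by
  simp [frobSq, Finset.mul_sum, mul_pow]

lemma frobNorm_nonneg (V : Matrix (Fin m) (Fin n) ℝ) : 0 ≤ frobNorm V :=
  Real.sqrt_nonneg _

lemma frobNorm_sq (V : Matrix (Fin m) (Fin n) ℝ) : frobNorm V ^ 2 = frobSq V :=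
  Real.sq_sqrt (frobSq_nonneg V)

lemma frobNorm_smul (t : ℝ) (V : Matrix (Fin m) (Fin n) ℝ) :
    frobNorm (t • V) = |t| * frobNorm V := by
  rw [frobNorm, frobSq_smul, Real.sqrt_mul (sq_nonneg t), Real.sqrt_sq_eq_abs, frobNorm]

lemma finner_le_frobNorm_mul (A B : Matrix (Fin m) (Fin n) ℝ) :
    finner A B ≤ frobNorm A * frobNorm B := by
  simpa [finner, frobNorm, frobSq, Fintype.sum_prod_type] using
    Real.sum_mul_le_sqrt_mul_sqrt Finset.univ (fun p : Fin m × Fin n => A p.1 p.2)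
      (fun p => B p.1 p.2)

lemma norm_le_frobNorm (V : Matrix (Fin m) (Fin n) ℝ) : ‖V‖ ≤ frobNorm V := by
  refine (Matrix.norm_le_iff (frobNorm_nonneg V)).2 fun i j => ?_
  rw [Real.norm_eq_abs, ← Real.sqrt_sq_eq_abs]
  refine Real.sqrt_le_sqrt ?_
  rw [frobSq, ← Fintype.sum_prod_type']
  exact Finset.single_le_sum (f := fun p : Fin m × Fin n => V p.1 p.2 ^ 2)
    (fun _ _ => sq_nonneg _) (Finset.mem_univ (i, j))

lemma tendsto_zero_of_frobSq_tendsto_zero {ι : Type*} {l : Filter ι}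
    {u : ι → Matrix (Fin m) (Fin n) ℝ} (h : Tendsto (fun k => frobSq (u k)) l (nhds 0)) :
    Tendsto u l (nhds 0) := by
  refine squeeze_zero_norm (fun k => norm_le_frobNorm (u k)) ?_
  simpa [frobNorm] using h.sqrt

lemma finner_mul_right {d : ℕ} (A : Matrix (Fin m) (Fin n) ℝ) (Q : Matrix (Fin m) (Fin d) ℝ)
    (D : Matrix (Fin d) (Fin n) ℝ) :
    finner A (Q * D) = finner (A * Dᵀ) Q := by
  simp only [finner, Matrix.mul_apply, Matrix.transpose_apply, Finset.mul_sum, Finset.sum_mul]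
  refine Finset.sum_congr rfl fun i _ => ?_
  rw [Finset.sum_comm]
  exact Finset.sum_congr rfl fun j _ => Finset.sum_congr rfl fun k _ => by ring

lemma frobSq_sub_mul_inv_le {d : ℕ} (D : Matrix (Fin d) (Fin n) ℝ) (hD : IsUnit (D * Dᵀ))
    (M : Matrix (Fin m) (Fin n) ℝ) (P : Matrix (Fin m) (Fin d) ℝ) :
    frobSq (M - M * Dᵀ * (D * Dᵀ)⁻¹ * D) ≤ frobSq (M - P * D) := by
  set Q := M * Dᵀ * (D * Dᵀ)⁻¹
  have hres : (M - Q * D) * Dᵀ = 0 := by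
    rw [Matrix.sub_mul, Matrix.mul_assoc Q, Matrix.mul_assoc (M * Dᵀ),
      Matrix.nonsing_inv_mul _ ((Matrix.isUnit_iff_isUnit_det _).1 hD), Matrix.mul_one, sub_self]
  have hsplit : M - P * D = (M - Q * D) + (Q - P) * D := by
    rw [Matrix.sub_mul]; abel
  rw [hsplit, frobSq_add, finner_mul_right, hres, finner_zero_left]
  linarith [frobSq_nonneg ((Q - P) * D)]

end Frobenius

lemma descent_lemma {m n : ℕ} {L : ℝ} {f : Matrix (Fin m) (Fin n) ℝ → ℝ}
    {f' : Matrix (Fin m) (Fin n) ℝ → Matrix (Fin m) (Fin n) ℝ}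
    (hdiff : ∀ X : Matrix (Fin m) (Fin n) ℝ, DifferentiableAt ℝ f X ∧
      ∀ H : Matrix (Fin m) (Fin n) ℝ, fderiv ℝ f X H = finner (f' X) H)
    (hlip : ∀ X Y : Matrix (Fin m) (Fin n) ℝ, frobNorm (f' X - f' Y) ≤ L * frobNorm (X - Y))
    (X Y : Matrix (Fin m) (Fin n) ℝ) :
    f Y ≤ f X + finner (f' X) (Y - X) + L / 2 * frobSq (Y - X) := by
  set Δ := Y - X
  have hline : ∀ t : ℝ,
      HasDerivAt (fun s : ℝ => f (X + s • Δ)) (finner (f' (X + t • Δ)) Δ) t := fun t => by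
    have hpath : HasDerivAt (fun s : ℝ => X + s • Δ) Δ t :=
      (((hasDerivAt_id' t).smul_const Δ).const_add X).congr_deriv (one_smul ℝ Δ)
    rw [← (hdiff _).2 Δ]
    exact (hdiff _).1.hasFDerivAt.comp_hasDerivAt t hpath
  have hslope : ∀ t ∈ Set.Ioo (0 : ℝ) 1, finner (f' (X + t • Δ)) Δ ≤
      finner (f' (X + (0 : ℝ) • Δ)) Δ + L * frobSq Δ * t := fun t ht => by
    have hgrad : frobNorm (f' (X + t • Δ) - f' X) ≤ L * (t * frobNorm Δ) := by
      simpa [frobNorm_smul, abs_of_pos ht.1] using hlip (X + t • Δ) X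
    calc finner (f' (X + t • Δ)) Δ
        = finner (f' X) Δ + finner (f' (X + t • Δ) - f' X) Δ := by rw [finner_sub_left]; ring
      _ ≤ finner (f' X) Δ + frobNorm (f' (X + t • Δ) - f' X) * frobNorm Δ := by
          gcongr; exact finner_le_frobNorm_mul _ _
      _ ≤ finner (f' X) Δ + L * (t * frobNorm Δ) * frobNorm Δ := by
          gcongr; exact frobNorm_nonneg Δ
      _ = finner (f' (X + (0 : ℝ) • Δ)) Δ + L * frobSq Δ * t := by
          rw [← frobNorm_sq, zero_smul, add_zero]; ring
  have := image_one_le_of_deriv_le_affine (fun t _ => hline t) hslope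
  simp only [one_smul, zero_smul, add_zero, Δ, add_sub_cancel] at this
  linarith

noncomputable def penalizedObjective {m n d : ℕ} (f : Matrix (Fin m) (Fin n) ℝ → ℝ) (β : ℝ)
    (D : Matrix (Fin d) (Fin n) ℝ) (M : Matrix (Fin m) (Fin n) ℝ)
    (P : Matrix (Fin m) (Fin d) ℝ) : ℝ :=
  f M + 1 / (2 * β) * frobSq (M - P * D)

/-- `hstep` is the optimality of the `M`-step tested against `N = M₀`. -/
lemma penalizedObjective_add_le {m n d : ℕ} {L α β : ℝ} (hβ : 0 < β)
    {D : Matrix (Fin d) (Fin n) ℝ} (hD : IsUnit (D * Dᵀ)) {f : Matrix (Fin m) (Fin n) ℝ → ℝ}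
    {G M₀ M₁ : Matrix (Fin m) (Fin n) ℝ} {P₀ : Matrix (Fin m) (Fin d) ℝ}
    (hdescent : f M₁ ≤ f M₀ + finner G (M₁ - M₀) + L / 2 * frobSq (M₁ - M₀))
    (hstep : finner G (M₁ - M₀) + 1 / (2 * α) * frobSq (M₁ - M₀)
        + 1 / (2 * β) * frobSq (M₁ - P₀ * D) ≤ 1 / (2 * β) * frobSq (M₀ - P₀ * D)) :
    penalizedObjective f β D M₁ (M₁ * Dᵀ * (D * Dᵀ)⁻¹)
        + (1 / (2 * α) - L / 2) * frobSq (M₁ - M₀) ≤ penalizedObjective f β D M₀ P₀ := by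
  have hls := mul_le_mul_of_nonneg_left (frobSq_sub_mul_inv_le D hD M₁ P₀)
    (by positivity : (0 : ℝ) ≤ 1 / (2 * β))
  unfold penalizedObjective
  linarith

lemma summable_and_tsum_le_of_add_le {F a : ℕ → ℝ} {γ c : ℝ} (hγ : 0 < γ)
    (hdec : ∀ k, F (k + 1) + γ * a k ≤ F k) (ha : ∀ k, 0 ≤ a k) (hc : ∀ k, c ≤ F k) :
    Summable a ∧ ∑' k, a k ≤ (F 0 - c) / γ := by
  have hpartial : ∀ K, ∑ i ∈ Finset.range K, a i ≤ (F 0 - c) / γ := fun K => by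
    have htel := Finset.sum_le_sum fun i (_ : i ∈ Finset.range K) =>
      show a i * γ ≤ F i - F (i + 1) by linarith [hdec i]
    rw [← Finset.sum_mul, Finset.sum_range_sub'] at htel
    rw [le_div_iff₀ hγ]
    linarith [hc K]
  exact ⟨summable_of_sum_range_le ha hpartial, Real.tsum_le_of_sum_range_le ha hpartial⟩

lemma tendsto_succ_sub_of_succ_eq_mul {ι κ ν : Type*} [Fintype ι] [Fintype κ] [Fintype ν]
    {M : ℕ → Matrix ι κ ℝ} {P : ℕ → Matrix ι ν ℝ} (C : Matrix κ ν ℝ)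
    (hP : ∀ k, P (k + 1) = M (k + 1) * C) (hM : Tendsto (fun k => M (k + 1) - M k) atTop (nhds 0)) :
    Tendsto (fun k => P (k + 1) - P k) atTop (nhds 0) := by
  have hcont : Continuous fun X : Matrix ι κ ℝ => X * C := continuous_id.matrix_mul continuous_const
  rw [← tendsto_add_atTop_iff_nat 1]
  simp only [hP, ← Matrix.sub_mul]
  exact (hcont.tendsto' 0 0 (Matrix.zero_mul C)).comp ((tendsto_add_atTop_iff_nat 1).2 hM)

theorem stmt_15_general {m n d : ℕ} (L α β : ℝ) (hα : 0 < α) (hαL : α < 1 / L)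
    (hβ : 0 < β)
    (D : Matrix (Fin d) (Fin n) ℝ) (hD : IsUnit (D * Dᵀ))
    (f : Matrix (Fin m) (Fin n) ℝ → ℝ)
    (f' : Matrix (Fin m) (Fin n) ℝ → Matrix (Fin m) (Fin n) ℝ)
    (hdiff : ∀ X : Matrix (Fin m) (Fin n) ℝ, DifferentiableAt ℝ f X ∧
      ∀ H : Matrix (Fin m) (Fin n) ℝ, fderiv ℝ f X H = finner (f' X) H)
    (hlip : ∀ X Y : Matrix (Fin m) (Fin n) ℝ, frobNorm (f' X - f' Y) ≤ L * frobNorm (X - Y))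
    (hbdd : ∃ c : ℝ, ∀ M : Matrix (Fin m) (Fin n) ℝ, (∀ i : Fin n, colNorm M i = 1) → c ≤ f M)
    (Mseq : ℕ → Matrix (Fin m) (Fin n) ℝ) (Pseq : ℕ → Matrix (Fin m) (Fin d) ℝ)
    (hMS : ∀ k, ∀ i : Fin n, colNorm (Mseq k) i = 1)
    (hMmin : ∀ k, ∀ N : Matrix (Fin m) (Fin n) ℝ, (∀ i : Fin n, colNorm N i = 1) →
      finner (f' (Mseq k)) (Mseq (k + 1) - Mseq k)
          + 1 / (2 * α) * frobSq (Mseq (k + 1) - Mseq k)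
          + 1 / (2 * β) * frobSq (Mseq (k + 1) - Pseq k * D) ≤
        finner (f' (Mseq k)) (N - Mseq k) + 1 / (2 * α) * frobSq (N - Mseq k)
          + 1 / (2 * β) * frobSq (N - Pseq k * D))
    (hPup : ∀ k, Pseq (k + 1) = Mseq (k + 1) * Dᵀ * (D * Dᵀ)⁻¹) :
    Summable (fun k => frobSq (Mseq (k + 1) - Mseq k)) ∧
    (∀ c : ℝ,
      (∀ (M : Matrix (Fin m) (Fin n) ℝ) (P : Matrix (Fin m) (Fin d) ℝ),
        c ≤ f M + 1 / (2 * β) * frobSq (M - P * D)) →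
      (∑' k, frobSq (Mseq (k + 1) - Mseq k)) ≤
        (f (Mseq 0) + 1 / (2 * β) * frobSq (Mseq 0 - Pseq 0 * D) - c)
          / (1 / (2 * α) - L / 2)) ∧
    Tendsto (fun k => Mseq (k + 1) - Mseq k) atTop (nhds 0) ∧
    Tendsto (fun k => Pseq (k + 1) - Pseq k) atTop (nhds 0) := by
  have hL : 0 < L := one_div_pos.mp (hα.trans hαL)
  have hγ : 0 < 1 / (2 * α) - L / 2 := by
    have hLα : L < 1 / α := (lt_one_div hα hL).1 hαL
    have : 1 / (2 * α) = 1 / α / 2 := by ring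
    linarith
  set F := fun k => penalizedObjective f β D (Mseq k) (Pseq k)
  set a := fun k => frobSq (Mseq (k + 1) - Mseq k)
  have hdec : ∀ k, F (k + 1) + (1 / (2 * α) - L / 2) * a k ≤ F k := fun k => by
    simp only [F, a, hPup k]
    refine penalizedObjective_add_le hβ hD (descent_lemma hdiff hlip _ _) ?_
    simpa using hMmin k (Mseq k) (hMS k)
  have ha : ∀ k, 0 ≤ a k := fun k => frobSq_nonneg _
  obtain ⟨c₀, hc₀⟩ := hbdd
  have hsum := (summable_and_tsum_le_of_add_le hγ hdec ha fun k =>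
    le_add_of_le_of_nonneg (hc₀ _ (hMS k)) (mul_nonneg (by positivity) (frobSq_nonneg _))).1
  have hM := tendsto_zero_of_frobSq_tendsto_zero hsum.tendsto_atTop_zero
  exact ⟨hsum, fun c hc => (summable_and_tsum_le_of_add_le hγ hdec ha fun k => hc _ _).2, hM,
    tendsto_succ_sub_of_succ_eq_mul _ (fun k => (hPup k).trans (Matrix.mul_assoc _ _ _)) hM⟩

/-- vanishing successive differences, Theorem 4(ii): under the hypotheses
of the alternating minimization scheme, with `f` bounded below on `S`, the series
`Σ_k ‖M_{k+1} − M_k‖_F²` converges — it is bounded by `(F(M₀,P₀) − inf F)/(1/(2α) − L/2)`,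
where `F(M,P) = f(M) + (1/(2β))‖M − PD‖_F²` — and consequently `M_{k+1} − M_k → 0` and
`P_{k+1} − P_k → 0`. -/
theorem stmt_15 {m n d : ℕ} (L α β : ℝ) (hL : 0 < L) (hα : 0 < α) (hαL : α < 1 / L)
    (hβ : 0 < β)
    (D : Matrix (Fin d) (Fin n) ℝ) (hD : IsUnit (D * Dᵀ))
    (f : Matrix (Fin m) (Fin n) ℝ → ℝ)
    (f' : Matrix (Fin m) (Fin n) ℝ → Matrix (Fin m) (Fin n) ℝ)
    (hdiff : ∀ X : Matrix (Fin m) (Fin n) ℝ, DifferentiableAt ℝ f X ∧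
      ∀ H : Matrix (Fin m) (Fin n) ℝ, fderiv ℝ f X H = finner (f' X) H)
    (hlip : ∀ X Y : Matrix (Fin m) (Fin n) ℝ, frobNorm (f' X - f' Y) ≤ L * frobNorm (X - Y))
    (hbdd : ∃ c : ℝ, ∀ M : Matrix (Fin m) (Fin n) ℝ, (∀ i : Fin n, colNorm M i = 1) → c ≤ f M)
    (Mseq : ℕ → Matrix (Fin m) (Fin n) ℝ) (Pseq : ℕ → Matrix (Fin m) (Fin d) ℝ)
    (hMS : ∀ k, ∀ i : Fin n, colNorm (Mseq k) i = 1)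
    (hMmin : ∀ k, ∀ N : Matrix (Fin m) (Fin n) ℝ, (∀ i : Fin n, colNorm N i = 1) →
      finner (f' (Mseq k)) (Mseq (k + 1) - Mseq k)
          + 1 / (2 * α) * frobSq (Mseq (k + 1) - Mseq k)
          + 1 / (2 * β) * frobSq (Mseq (k + 1) - Pseq k * D) ≤
        finner (f' (Mseq k)) (N - Mseq k) + 1 / (2 * α) * frobSq (N - Mseq k)
          + 1 / (2 * β) * frobSq (N - Pseq k * D))
    (hPup : ∀ k, Pseq (k + 1) = Mseq (k + 1) * Dᵀ * (D * Dᵀ)⁻¹) :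
    Summable (fun k => frobSq (Mseq (k + 1) - Mseq k)) ∧
    (∀ c : ℝ,
      (∀ (M : Matrix (Fin m) (Fin n) ℝ) (P : Matrix (Fin m) (Fin d) ℝ),
        c ≤ f M + 1 / (2 * β) * frobSq (M - P * D)) →
      (∑' k, frobSq (Mseq (k + 1) - Mseq k)) ≤
        (f (Mseq 0) + 1 / (2 * β) * frobSq (Mseq 0 - Pseq 0 * D) - c)
          / (1 / (2 * α) - L / 2)) ∧
    Tendsto (fun k => Mseq (k + 1) - Mseq k) atTop (nhds 0) ∧
    Tendsto (fun k => Pseq (k + 1) - Pseq k) atTop (nhds 0) :=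
  stmt_15_general L α β hα hαL hβ D hD f f' hdiff hlip hbdd Mseq Pseq hMS hMmin hPup
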